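/- The sequence whose k-th term is 2^k · Σ_{n ≥ k} √(2 − c_n) converges to π as k → ∞. -/

import Mathlib

open Real Filter

/-- The nested radicals `c 0 = 0`, `c (k+1) = √(2 + c k)`. -/
noncomputable def c : ℕ → ℝ
  | 0 => 0
  | k + 1 => Real.sqrt (2 + c k)

lemma c_eq_cos (k : ℕ) : c k = 2 * Real.cos (π / 2 ^ (k + 1)) := by
  induction k with
  | zero => simp [c]
  | succ k ih =>
    have hx : (0:ℝ) < π / 2 ^ (k + 2) := by positivity
    have hx2 : π / 2 ^ (k + 2) ≤ π / 2 := by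
      apply div_le_div_of_nonneg_left pi_pos.le (by norm_num)
      calc (2:ℝ) ≤ 2 ^ 2 := by norm_num
        _ ≤ 2 ^ (k + 2) := by
          apply pow_le_pow_right₀ (by norm_num); omega
    have hcos : 0 ≤ Real.cos (π / 2 ^ (k + 2)) :=
      Real.cos_nonneg_of_mem_Icc ⟨by linarith [hx], hx2⟩
    have hdouble : π / 2 ^ (k + 1) = 2 * (π / 2 ^ (k + 2)) := by
      rw [pow_succ]; ring
    have h4 : 2 + c k = (2 * Real.cos (π / 2 ^ (k + 2))) ^ 2 := by
      rw [ih, hdouble, Real.cos_two_mul]; ring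
    show Real.sqrt (2 + c k) = _
    rw [h4, Real.sqrt_sq_eq_abs, abs_of_nonneg (by positivity)]

lemma sqrt_two_sub_c (n : ℕ) : Real.sqrt (2 - c n) = 2 * Real.sin (π / 2 ^ (n + 2)) := by
  have hx : (0:ℝ) < π / 2 ^ (n + 2) := by positivity
  have hx2 : π / 2 ^ (n + 2) ≤ π := by
    apply div_le_self pi_pos.le
    calc (1:ℝ) = 1 ^ (n + 2) := (one_pow _).symm
      _ ≤ 2 ^ (n + 2) := pow_le_pow_left₀ (by norm_num) (by norm_num) _
  have hsin : 0 ≤ Real.sin (π / 2 ^ (n + 2)) :=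
    Real.sin_nonneg_of_nonneg_of_le_pi hx.le hx2
  have hdouble : π / 2 ^ (n + 1) = 2 * (π / 2 ^ (n + 2)) := by
    rw [pow_succ]; ring
  have h4 : 2 - c n = (2 * Real.sin (π / 2 ^ (n + 2))) ^ 2 := by
    rw [c_eq_cos, hdouble, Real.cos_two_mul]
    have := Real.sin_sq_add_cos_sq (π / 2 ^ (n + 2))
    nlinarith [this]
  rw [h4, Real.sqrt_sq_eq_abs, abs_of_nonneg (by positivity)]

/-- The equivalence `ℕ ≃ {n // k ≤ n}` given by `m ↦ m + k`. -/
def natShiftEquiv (k : ℕ) : ℕ ≃ {n : ℕ // k ≤ n} where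
  toFun m := ⟨m + k, Nat.le_add_left k m⟩
  invFun n := (n : ℕ) - k
  left_inv m := by simp
  right_inv n := by ext; simp [Nat.sub_add_cancel n.2]

/-- The sequence whose `k`-th term is `2 ^ k * Σ_{n ≥ k} √(2 - c n)`
converges to `π` as `k → ∞`. -/
theorem tendsto_two_pow_mul_tsum_sqrt_pi :
    Filter.Tendsto
      (fun k : ℕ => (2 : ℝ) ^ k *
        ∑' n : {n : ℕ // k ≤ n}, Real.sqrt (2 - c (n : ℕ)))
      Filter.atTop (nhds Real.pi) := by
  set f : ℕ → ℝ := fun n => 2 * Real.sin (π / 2 ^ (n + 2)) with hf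
  have hfpos : ∀ n, 0 < π / 2 ^ (n + 2) := fun n => by positivity
  have hfle1 : ∀ n, π / 2 ^ (n + 2) ≤ 1 := by
    intro n
    rw [div_le_one (by positivity)]
    calc π ≤ 4 := by linarith [Real.pi_lt_d2]
      _ = 2 ^ 2 := by norm_num
      _ ≤ 2 ^ (n + 2) := by apply pow_le_pow_right₀ (by norm_num); omega
  -- upper bound: f n ≤ π / 2 ^ (n+1)
  have hub : ∀ n, f n ≤ π / 2 ^ (n + 1) := by
    intro n
    have h := (Real.sin_lt (hfpos n)).le
    have : π / 2 ^ (n + 1) = 2 * (π / 2 ^ (n + 2)) := by rw [pow_succ]; ring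
    rw [this, hf]; linarith
  -- lower bound
  have hlb : ∀ n, π / 2 ^ (n + 1) - (π ^ 3 / 2) * (1 / 8) ^ (n + 2) ≤ f n := by
    intro n
    have h := (Real.sin_gt_sub_cube (hfpos n)).le
    have h1 : π / 2 ^ (n + 1) = 2 * (π / 2 ^ (n + 2)) := by rw [pow_succ]; ring
    have h2 : (π / 2 ^ (n + 2)) ^ 3 = π ^ 3 * (1 / 8) ^ (n + 2) := by
      have h8 : ((8:ℝ)) ^ (n + 2) = (2 ^ (n + 2)) ^ 3 := by
        rw [show (8:ℝ) = 2 ^ 3 by norm_num, ← pow_mul, ← pow_mul, mul_comm]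
      rw [div_pow, div_pow, one_pow, h8, mul_one_div]
    rw [h1, hf]
    beta_reduce
    nlinarith [h, h2, show (0:ℝ) < π ^ 3 * (1 / 8) ^ (n + 2) by positivity]
  have hfnonneg : ∀ n, 0 ≤ f n := by
    intro n
    have : π / 2 ^ (n + 2) ≤ π := by
      apply div_le_self pi_pos.le
      calc (1:ℝ) = 1 ^ (n + 2) := (one_pow _).symm
        _ ≤ 2 ^ (n + 2) := pow_le_pow_left₀ (by norm_num) (by norm_num) _
    exact mul_nonneg (by norm_num)
      (Real.sin_nonneg_of_nonneg_of_le_pi (hfpos n).le this)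
  -- summability
  have hgeo2 : Summable (fun n : ℕ => ((1:ℝ)/2) ^ n) :=
    summable_geometric_of_lt_one (by norm_num) (by norm_num)
  have hub_sum : ∀ k : ℕ, Summable (fun m : ℕ => π / 2 ^ (m + k + 1)) := by
    intro k
    have : (fun m : ℕ => π / 2 ^ (m + k + 1)) =
        fun m : ℕ => (π / 2 ^ (k + 1)) * ((1:ℝ)/2) ^ m := by
      funext m
      rw [div_pow, one_pow, div_mul_div_comm, mul_one, ← pow_add,
        show k + 1 + m = m + k + 1 by ring]
    rw [this]
    exact hgeo2.mul_left _
  have hsum : Summable f := by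
    apply Summable.of_nonneg_of_le hfnonneg hub
    simpa using hub_sum 0
  have hsum_shift : ∀ k, Summable (fun m : ℕ => f (m + k)) := fun k =>
    (summable_nat_add_iff k).2 hsum
  -- reindex the subtype tsum
  have hreindex : ∀ k : ℕ,
      (∑' n : {n : ℕ // k ≤ n}, Real.sqrt (2 - c (n : ℕ))) = ∑' m : ℕ, f (m + k) := by
    intro k
    rw [← (natShiftEquiv k).tsum_eq (fun n : {n : ℕ // k ≤ n} => Real.sqrt (2 - c (n : ℕ)))]
    exact tsum_congr fun m => sqrt_two_sub_c (m + k)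
  -- compute geometric sums
  have tsum2 : ∑' m : ℕ, ((1:ℝ)/2) ^ m = 2 := by
    rw [tsum_geometric_of_lt_one (by norm_num) (by norm_num)]; norm_num
  have hgeo8 : Summable (fun n : ℕ => ((1:ℝ)/8) ^ n) :=
    summable_geometric_of_lt_one (by norm_num) (by norm_num)
  have tsum8 : ∑' m : ℕ, ((1:ℝ)/8) ^ m = 8 / 7 := by
    rw [tsum_geometric_of_lt_one (by norm_num) (by norm_num)]; norm_num
  -- the upper sum
  have hupper_tsum : ∀ k : ℕ, (∑' m : ℕ, π / 2 ^ (m + k + 1)) = π / 2 ^ k := by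
    intro k
    have : (fun m : ℕ => π / 2 ^ (m + k + 1)) =
        fun m : ℕ => (π / 2 ^ (k + 1)) * ((1:ℝ)/2) ^ m := by
      funext m
      rw [div_pow, one_pow, div_mul_div_comm, mul_one, ← pow_add,
        show k + 1 + m = m + k + 1 by ring]
    rw [this, tsum_mul_left, tsum2, pow_succ]
    field_simp
  -- upper bound on S k
  have hS_le : ∀ k : ℕ, (∑' m : ℕ, f (m + k)) ≤ π / 2 ^ k := by
    intro k
    rw [← hupper_tsum k]
    exact Summable.tsum_le_tsum (fun m => hub (m + k)) (hsum_shift k) (hub_sum k)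
  -- lower bound on S k
  have hlow_sum : ∀ k : ℕ, Summable
      (fun m : ℕ => π / 2 ^ (m + k + 1) - (π ^ 3 / 2) * (1 / 8) ^ (m + k + 2)) := by
    intro k
    apply (hub_sum k).sub
    have : (fun m : ℕ => (π ^ 3 / 2) * ((1:ℝ) / 8) ^ (m + k + 2)) =
        fun m : ℕ => ((π ^ 3 / 2) * ((1:ℝ)/8) ^ (k + 2)) * ((1:ℝ)/8) ^ m := by
      funext m; rw [show m + k + 2 = m + (k + 2) by ring, pow_add]; ring
    rw [this]
    exact hgeo8.mul_left _
  have hlow_tsum : ∀ k : ℕ,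
      (∑' m : ℕ, (π / 2 ^ (m + k + 1) - (π ^ 3 / 2) * (1 / 8) ^ (m + k + 2)))
        = π / 2 ^ k - (π ^ 3 / 2) * (8 / 7) * ((1:ℝ)/8) ^ (k + 2) := by
    intro k
    rw [Summable.tsum_sub (hub_sum k) (by
      have : (fun m : ℕ => (π ^ 3 / 2) * ((1:ℝ) / 8) ^ (m + k + 2)) =
          fun m : ℕ => ((π ^ 3 / 2) * ((1:ℝ)/8) ^ (k + 2)) * ((1:ℝ)/8) ^ m := by
        funext m; rw [show m + k + 2 = m + (k + 2) by ring, pow_add]; ring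
      rw [this]; exact hgeo8.mul_left _)]
    rw [hupper_tsum k]
    congr 1
    have : (fun m : ℕ => (π ^ 3 / 2) * ((1:ℝ) / 8) ^ (m + k + 2)) =
        fun m : ℕ => ((π ^ 3 / 2) * ((1:ℝ)/8) ^ (k + 2)) * ((1:ℝ)/8) ^ m := by
      funext m; rw [show m + k + 2 = m + (k + 2) by ring, pow_add]; ring
    rw [this, tsum_mul_left, tsum8]
    ring
  have hS_ge : ∀ k : ℕ, π / 2 ^ k - (π ^ 3 / 2) * (8 / 7) * ((1:ℝ)/8) ^ (k + 2)
      ≤ (∑' m : ℕ, f (m + k)) := by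
    intro k
    rw [← hlow_tsum k]
    exact Summable.tsum_le_tsum (fun m => hlb (m + k)) (hlow_sum k) (hsum_shift k)
  -- now the squeeze
  set E : ℝ := (π ^ 3 / 2) * (8 / 7) * (1/64) with hE
  have hglb : ∀ k : ℕ, π - E * ((1:ℝ)/4) ^ k ≤
      (2:ℝ) ^ k * ∑' n : {n : ℕ // k ≤ n}, Real.sqrt (2 - c (n : ℕ)) := by
    intro k
    rw [hreindex k]
    have h := hS_ge k
    have h2 : (2:ℝ) ^ k * (π / 2 ^ k - (π ^ 3 / 2) * (8 / 7) * ((1:ℝ)/8) ^ (k + 2))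
        = π - E * ((1:ℝ)/4) ^ k := by
      have h8 : ((1:ℝ)/8) ^ (k + 2) = ((1:ℝ)/8) ^ k * (1/64) := by
        rw [pow_add]; norm_num
      have h24 : (2:ℝ) ^ k * ((1:ℝ)/8) ^ k = ((1:ℝ)/4) ^ k := by
        rw [← mul_pow]; norm_num
      have ha : (2:ℝ) ^ k * (π / 2 ^ k) = π := by field_simp
      rw [mul_sub, ha, hE, ← h24, h8]; ring
    rw [← h2]
    exact mul_le_mul_of_nonneg_left h (by positivity)
  have hgub : ∀ k : ℕ,
      (2:ℝ) ^ k * (∑' n : {n : ℕ // k ≤ n}, Real.sqrt (2 - c (n : ℕ))) ≤ π := by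
    intro k
    rw [hreindex k]
    have h := hS_le k
    have : (2:ℝ) ^ k * (π / 2 ^ k) = π := by field_simp
    calc (2:ℝ) ^ k * (∑' m : ℕ, f (m + k)) ≤ (2:ℝ) ^ k * (π / 2 ^ k) :=
          mul_le_mul_of_nonneg_left h (by positivity)
      _ = π := this
  have hlow_tendsto : Tendsto (fun k : ℕ => π - E * ((1:ℝ)/4) ^ k) atTop (nhds π) := by
    have h4 : Tendsto (fun k : ℕ => ((1:ℝ)/4) ^ k) atTop (nhds 0) :=
      tendsto_pow_atTop_nhds_zero_of_lt_one (by norm_num) (by norm_num)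
    have := h4.const_mul E
    have h2 := (tendsto_const_nhds (x := π) (f := atTop (α := ℕ))).sub this
    simpa using h2
  exact tendsto_of_tendsto_of_tendsto_of_le_of_le hlow_tendsto tendsto_const_nhds hglb hgub
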